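/- Let G be a graph with Proj(Cli(G)) = G, and suppose that for every 2-connected component C of Cli(G), Proj(C) has a unique minimum preimage. Then G has a unique minimum d-uniform hypergraph preimage, equal to the union of the minimum preimages of the projections of the 2-connected components of Cli(G). -/

import Mathlib

set_option linter.unusedSectionVars false
set_option linter.unusedVariables false


open Finset

variable {V : Type*} [Fintype V] [DecidableEq V]

/-- The projection of a hypergraph. -/
def proj (H : Finset (Finset V)) : SimpleGraph V where
  Adj i j := i ≠ j ∧ ∃ h ∈ H, i ∈ h ∧ j ∈ h
  symm := by constructor; rintro i j ⟨hij, h, hH, hi, hj⟩; exact ⟨hij.symm, h, hH, hj, hi⟩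
  loopless := by constructor; rintro i ⟨hii, -⟩; exact hii rfl

open Classical in
/-- The clique hypergraph of `G`: all `d`-subsets of vertices forming cliques of `G`. -/
noncomputable def cli (G : SimpleGraph V) (d : ℕ) : Finset (Finset V) :=
  Finset.univ.filter fun h : Finset V =>
    h.card = d ∧ ∀ i ∈ h, ∀ j ∈ h, i ≠ j → G.Adj i j

/-- Two hyperedges of `K` are 2-adjacent if they share at least two vertices. -/
def twoAdj (K : Finset (Finset V)) (a b : Finset V) : Prop :=
  a ∈ K ∧ b ∈ K ∧ 2 ≤ (a ∩ b).card

open Classical in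
/-- The 2-connected component of the hyperedge `h` in the hypergraph `K`. -/
noncomputable def component (K : Finset (Finset V)) (h : Finset V) : Finset (Finset V) :=
  K.filter fun h' => Relation.ReflTransGen (twoAdj K) h h'

/-- The 2-connected components of the hypergraph `K`. -/
noncomputable def comps (K : Finset (Finset V)) : Finset (Finset (Finset V)) :=
  K.image (component K)

/-- `M` is a minimum `d`-uniform preimage of the graph `G'`. -/
def IsMinPre (d : ℕ) (M : Finset (Finset V)) (G' : SimpleGraph V) : Prop :=
  (∀ h ∈ M, h.card = d) ∧ proj M = G' ∧
    ∀ M' : Finset (Finset V), (∀ h ∈ M', h.card = d) → proj M' = G' → M.card ≤ M'.card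

-- auxiliary lemmas

lemma mem_cli {G : SimpleGraph V} {d : ℕ} {h : Finset V} :
    h ∈ cli G d ↔ h.card = d ∧ ∀ i ∈ h, ∀ j ∈ h, i ≠ j → G.Adj i j := by
  classical
  simp [cli]

lemma mem_component {K : Finset (Finset V)} {h h' : Finset V} :
    h' ∈ component K h ↔ h' ∈ K ∧ Relation.ReflTransGen (twoAdj K) h h' := by
  classical
  simp [component]

lemma twoAdj_symm (K : Finset (Finset V)) : Symmetric (twoAdj K) := by
  rintro a b ⟨ha, hb, hc⟩
  exact ⟨hb, ha, by rwa [Finset.inter_comm]⟩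

lemma mem_component_self {K : Finset (Finset V)} {h : Finset V} (hh : h ∈ K) :
    h ∈ component K h := mem_component.2 ⟨hh, Relation.ReflTransGen.refl⟩

lemma component_subset {K : Finset (Finset V)} {h : Finset V} : component K h ⊆ K :=
  fun x hx => (mem_component.1 hx).1

lemma component_eq {K : Finset (Finset V)} {h h' : Finset V}
    (hh' : h' ∈ component K h) : component K h' = component K h := by
  obtain ⟨hK', hrel⟩ := mem_component.1 hh'
  ext x
  rw [mem_component, mem_component]
  constructor
  · rintro ⟨hx, hr⟩; exact ⟨hx, hrel.trans hr⟩
  · rintro ⟨hx, hr⟩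
    haveI : Std.Symm (twoAdj K) := ⟨fun a b hab => twoAdj_symm K hab⟩
    exact ⟨hx, ((Relation.ReflTransGen.symmetric (r := twoAdj K)).symm _ _ hrel).trans hr⟩

lemma mem_comps {K C : Finset (Finset V)} :
    C ∈ comps K ↔ ∃ h ∈ K, component K h = C := by
  classical
  simp [comps]

lemma comps_subset {K C : Finset (Finset V)} (hC : C ∈ comps K) : C ⊆ K := by
  obtain ⟨h, -, rfl⟩ := mem_comps.1 hC
  exact component_subset

lemma comps_disjoint {K C1 C2 : Finset (Finset V)}
    (h1 : C1 ∈ comps K) (h2 : C2 ∈ comps K) (hne : C1 ≠ C2) : Disjoint C1 C2 := by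
  obtain ⟨a, ha, rfl⟩ := mem_comps.1 h1
  obtain ⟨b, hb, rfl⟩ := mem_comps.1 h2
  rw [Finset.disjoint_left]
  intro x hxa hxb
  exact hne ((component_eq hxa).symm.trans (component_eq hxb))

lemma preimage_subset_cli {G : SimpleGraph V} {d : ℕ}
    {M : Finset (Finset V)} (hcard : ∀ h ∈ M, h.card = d)
    (hadj : ∀ i j, (proj M).Adj i j → G.Adj i j) : M ⊆ cli G d := by
  intro h hM
  rw [mem_cli]
  exact ⟨hcard h hM, fun i hi j hj hij => hadj i j ⟨hij, h, hM, hi, hj⟩⟩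

lemma projC_le {G : SimpleGraph V} {d : ℕ} (hG : proj (cli G d) = G)
    {C : Finset (Finset V)} (hC : C ∈ comps (cli G d)) {i j : V}
    (h : (proj C).Adj i j) : G.Adj i j := by
  obtain ⟨hij, h', hh', hi, hj⟩ := h
  rw [← hG]
  exact ⟨hij, h', comps_subset hC hh', hi, hj⟩

lemma two_le_card_of_minpre {d : ℕ} {M : Finset (Finset V)} {G' : SimpleGraph V}
    (hM : IsMinPre d M G') {h : Finset V} (hh : h ∈ M) :
    ∃ i ∈ h, ∃ j ∈ h, i ≠ j := by
  by_contra hc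
  push_neg at hc
  have hproj : proj (M.erase h) = G' := by
    rw [← hM.2.1]
    ext i j
    constructor
    · rintro ⟨hij, h', hh', hi, hj⟩
      exact ⟨hij, h', Finset.mem_of_mem_erase hh', hi, hj⟩
    · rintro ⟨hij, h', hh', hi, hj⟩
      refine ⟨hij, h', Finset.mem_erase.2 ⟨?_, hh'⟩, hi, hj⟩
      rintro rfl
      exact hij (hc i hi j hj)
  have h1 := hM.2.2 (M.erase h) (fun h' hh' => hM.1 h' (Finset.mem_of_mem_erase hh')) hproj
  have h2 := Finset.card_erase_of_mem hh
  have h3 : 0 < M.card := Finset.card_pos.2 ⟨h, hh⟩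
  omega

lemma two_le_inter {i j : V} {a b : Finset V} (hij : i ≠ j)
    (hia : i ∈ a) (hja : j ∈ a) (hib : i ∈ b) (hjb : j ∈ b) : 2 ≤ (a ∩ b).card := by
  have hsub : ({i, j} : Finset V) ⊆ a ∩ b := by
    intro x hx
    rw [Finset.mem_insert, Finset.mem_singleton] at hx
    rcases hx with rfl | rfl <;> simp [Finset.mem_inter, *]
  calc 2 = ({i, j} : Finset V).card := (Finset.card_pair hij).symm
  _ ≤ _ := Finset.card_le_card hsub

lemma minpre_subset_component {G : SimpleGraph V} {d : ℕ} (hG : proj (cli G d) = G)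
    {C M : Finset (Finset V)} (hC : C ∈ comps (cli G d)) (hM : IsMinPre d M (proj C)) :
    M ⊆ C := by
  obtain ⟨h0, h0K, rfl⟩ := mem_comps.1 hC
  intro h hh
  obtain ⟨i, hi, j, hj, hij⟩ := two_le_card_of_minpre hM hh
  have hadjM : (proj M).Adj i j := ⟨hij, h, hh, hi, hj⟩
  rw [hM.2.1] at hadjM
  obtain ⟨-, h', hh', hi', hj'⟩ := hadjM
  have hMK : M ⊆ cli G d := preimage_subset_cli hM.1 (fun a b hab => by
    rw [hM.2.1] at hab; exact projC_le hG hC hab)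
  have htwo : twoAdj (cli G d) h' h :=
    ⟨comps_subset hC hh', hMK hh, two_le_inter hij hi' hj' hi hj⟩
  have hmem : h ∈ component (cli G d) h' :=
    mem_component.2 ⟨hMK hh, Relation.ReflTransGen.single htwo⟩
  rwa [component_eq hh'] at hmem

lemma proj_inter_component {G : SimpleGraph V} {d : ℕ} (hG : proj (cli G d) = G)
    {M C : Finset (Finset V)} (hMp : proj M = G) (hMK : M ⊆ cli G d)
    (hC : C ∈ comps (cli G d)) : proj (M ∩ C) = proj C := by
  obtain ⟨h0, h0K, rfl⟩ := mem_comps.1 hC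
  ext i j
  constructor
  · rintro ⟨hij, h, hh, hi, hj⟩
    exact ⟨hij, h, (Finset.mem_inter.1 hh).2, hi, hj⟩
  · rintro ⟨hij, h', hh', hi, hj⟩
    have hGadj : G.Adj i j := by
      rw [← hG]; exact ⟨hij, h', component_subset hh', hi, hj⟩
    rw [← hMp] at hGadj
    obtain ⟨-, h, hh, hi2, hj2⟩ := hGadj
    have htwo : twoAdj (cli G d) h' h :=
      ⟨component_subset hh', hMK hh, two_le_inter hij hi hj hi2 hj2⟩
    have hcomp : h ∈ component (cli G d) h' :=
      mem_component.2 ⟨hMK hh, Relation.ReflTransGen.single htwo⟩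
    rw [component_eq hh'] at hcomp
    exact ⟨hij, h, Finset.mem_inter.2 ⟨hh, hcomp⟩, hi2, hj2⟩

lemma eq_biUnion {K M : Finset (Finset V)} (hMK : M ⊆ K) :
    M = (comps K).biUnion (fun C => M ∩ C) := by
  ext h
  simp only [Finset.mem_biUnion, Finset.mem_inter]
  constructor
  · intro hh
    exact ⟨component K h, mem_comps.2 ⟨h, hMK hh, rfl⟩, hh, mem_component_self (hMK hh)⟩
  · rintro ⟨C, -, hh, -⟩
    exact hh

lemma card_decomp {K M : Finset (Finset V)} (hMK : M ⊆ K) :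
    M.card = ∑ C ∈ comps K, (M ∩ C).card := by
  conv_lhs => rw [eq_biUnion hMK]
  exact Finset.card_biUnion (fun C1 h1 C2 h2 hne =>
    (comps_disjoint h1 h2 hne).mono Finset.inter_subset_right Finset.inter_subset_right)

lemma card_sup {K : Finset (Finset V)} {f : Finset (Finset V) → Finset (Finset V)}
    (hf : ∀ C ∈ comps K, f C ⊆ C) :
    ((comps K).sup f).card = ∑ C ∈ comps K, (f C).card := by
  rw [Finset.sup_eq_biUnion]
  exact Finset.card_biUnion (fun C1 h1 C2 h2 hne =>
    (comps_disjoint h1 h2 hne).mono (hf C1 h1) (hf C2 h2))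

lemma sup_isMinPre {G : SimpleGraph V} {d : ℕ} (hG : proj (cli G d) = G)
    (f : Finset (Finset V) → Finset (Finset V))
    (hf : ∀ C ∈ comps (cli G d), IsMinPre d (f C) (proj C)) :
    IsMinPre d ((comps (cli G d)).sup f) G := by
  have hfC : ∀ C ∈ comps (cli G d), f C ⊆ C := fun C hC =>
    minpre_subset_component hG hC (hf C hC)
  have hmem : ∀ h ∈ (comps (cli G d)).sup f, ∃ C ∈ comps (cli G d), h ∈ f C :=
    fun h hh => Finset.mem_sup.1 hh
  refine ⟨?_, ?_, ?_⟩
  · intro h hh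
    obtain ⟨C, hC, hhC⟩ := hmem h hh
    exact (hf C hC).1 h hhC
  · ext i j
    constructor
    · rintro ⟨hij, h, hh, hi, hj⟩
      obtain ⟨C, hC, hhC⟩ := hmem h hh
      rw [← hG]
      exact ⟨hij, h, comps_subset hC (hfC C hC hhC), hi, hj⟩
    · intro hadj
      rw [← hG] at hadj
      obtain ⟨hij, h, hhK, hi, hj⟩ := hadj
      have hC : component (cli G d) h ∈ comps (cli G d) := mem_comps.2 ⟨h, hhK, rfl⟩
      have hadj2 : (proj (component (cli G d) h)).Adj i j :=
        ⟨hij, h, mem_component_self hhK, hi, hj⟩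
      rw [← (hf _ hC).2.1] at hadj2
      obtain ⟨-, h', hh', hi', hj'⟩ := hadj2
      exact ⟨hij, h', Finset.mem_sup.2 ⟨_, hC, hh'⟩, hi', hj'⟩
  · intro M' hM'card hM'proj
    have hM'K : M' ⊆ cli G d :=
      preimage_subset_cli hM'card (fun a b hab => by rwa [hM'proj] at hab)
    rw [card_sup hfC, card_decomp hM'K]
    exact Finset.sum_le_sum (fun C hC =>
      (hf C hC).2.2 (M' ∩ C) (fun h hh => hM'card h (Finset.mem_inter.1 hh).1)
        (proj_inter_component hG hM'proj hM'K hC))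

/-- If every 2-connected component `C` of `Cli(G)` is such that `proj C` has a unique
minimum preimage, and `proj (Cli G d) = G`, then `G` has a unique minimum `d`-uniform
preimage, equal to the union of the minimum preimages of the projections of the
2-connected components. -/
theorem unique_min_preimage_of_componentwise_unique (d : ℕ) (G : SimpleGraph V)
    (hG : proj (cli G d) = G)
    (huniq : ∀ C ∈ comps (cli G d), ∃! M : Finset (Finset V), IsMinPre d M (proj C)) :
    (∃! H : Finset (Finset V), IsMinPre d H G) ∧
    (∀ f : Finset (Finset V) → Finset (Finset V),
      (∀ C ∈ comps (cli G d), IsMinPre d (f C) (proj C)) →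
      IsMinPre d ((comps (cli G d)).sup f) G) := by
  classical
  refine ⟨?_, fun f' hf' => sup_isMinPre hG f' hf'⟩
  let f : Finset (Finset V) → Finset (Finset V) :=
    fun C => if hC : C ∈ comps (cli G d) then (huniq C hC).choose else ∅
  have hf : ∀ C ∈ comps (cli G d), IsMinPre d (f C) (proj C) := by
    intro C hC
    simp only [f, dif_pos hC]
    exact (huniq C hC).choose_spec.1
  have hfuniq : ∀ C (hC : C ∈ comps (cli G d)), ∀ M, IsMinPre d M (proj C) → M = f C := by
    intro C hC M hM
    simp only [f, dif_pos hC]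
    exact (huniq C hC).choose_spec.2 M hM
  have hsup := sup_isMinPre hG f hf
  refine ⟨(comps (cli G d)).sup f, hsup, ?_⟩
  intro M hM
  have hMK : M ⊆ cli G d :=
    preimage_subset_cli hM.1 (fun a b hab => by rwa [hM.2.1] at hab)
  have hle : M.card ≤ ((comps (cli G d)).sup f).card := hM.2.2 _ hsup.1 hsup.2.1
  have hfsub : ∀ C ∈ comps (cli G d), f C ⊆ C := fun C hC =>
    minpre_subset_component hG hC (hf C hC)
  have hcardle : ∀ C ∈ comps (cli G d), (f C).card ≤ (M ∩ C).card := fun C hC =>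
    (hf C hC).2.2 (M ∩ C) (fun h hh => hM.1 h (Finset.mem_inter.1 hh).1)
      (proj_inter_component hG hM.2.1 hMK hC)
  have hsum : ∑ C ∈ comps (cli G d), (M ∩ C).card ≤ ∑ C ∈ comps (cli G d), (f C).card := by
    rw [← card_decomp hMK, ← card_sup hfsub]
    exact hle
  have heq : ∀ C ∈ comps (cli G d), (f C).card = (M ∩ C).card := by
    rw [← Finset.sum_eq_sum_iff_of_le hcardle]
    exact le_antisymm (Finset.sum_le_sum hcardle) hsum
  have hMC : ∀ C ∈ comps (cli G d), M ∩ C = f C := by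
    intro C hC
    refine hfuniq C hC _ ⟨fun h hh => hM.1 h (Finset.mem_inter.1 hh).1,
      proj_inter_component hG hM.2.1 hMK hC, ?_⟩
    intro M'' hcard'' hproj''
    calc (M ∩ C).card = (f C).card := (heq C hC).symm
    _ ≤ M''.card := (hf C hC).2.2 M'' hcard'' hproj''
  rw [eq_biUnion hMK, Finset.sup_eq_biUnion]
  exact Finset.biUnion_congr rfl hMC
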